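/- Let n ≥ 4 and let w be a recurrent infinite word over an n-letter alphabet with exactly n Abelian factors of every length m ≥ 1. Then the unique cycle of the factor graph G of w cannot be an m-cycle with m ≥ 4. (Indeed, if it were, G would be an n-cycle and w would be a suffix of (12...n)^ω or (n...21)^ω, contradicting constant Abelian complexity n.) -/

import Mathlib

/-- The factor of the infinite word `w` of length `m` starting at position `i`. -/
def factorAt {α : Type*} (w : ℕ → α) (i m : ℕ) : List α :=
  (List.range m).map fun k => w (i + k)

/-- `u` is a (finite) factor of the infinite word `w`. -/
def IsFactor {α : Type*} (w : ℕ → α) (u : List α) : Prop :=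
  ∃ i, u = factorAt w i u.length

/-- `w` is recurrent: every factor occurs infinitely often. -/
def Recurrent {α : Type*} (w : ℕ → α) : Prop :=
  ∀ u, IsFactor w u → ∀ N, ∃ i, N ≤ i ∧ u = factorAt w i u.length

/-- The set of Abelian factors (anagram classes, i.e. multisets) of length `m` of `w`. -/
def abelianFactors {α : Type*} (w : ℕ → α) (m : ℕ) : Set (Multiset α) :=
  {s | ∃ i, s = (factorAt w i m : Multiset α)}

/-- `{a,b}` is an edge of the factor graph of `w` (loops allowed). -/
def HasEdge {α : Type*} (w : ℕ → α) (a b : α) : Prop :=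
  IsFactor w [a, b] ∨ IsFactor w [b, a]

/-- The set of triples associated with the letter `a`: anagram classes of
length-3 factors of `w` whose middle letter is `a`. -/
def triples {α : Type*} (w : ℕ → α) (a : α) : Set (Multiset α) :=
  {s | ∃ x y, IsFactor w [x, a, y] ∧ s = ({x, a, y} : Multiset α)}

/-- The edge sets of cycles of a graph with edge set `E` (loops allowed):
a cycle is either a loop or a cycle on `m ≥ 3` distinct vertices. -/
def cycleEdgeSets {V : Type*} (E : Set (Sym2 V)) : Set (Set (Sym2 V)) :=
  {C | (∃ v, s(v, v) ∈ E ∧ C = {s(v, v)}) ∨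
       (∃ m : ℕ, 3 ≤ m ∧ ∃ f : ZMod m → V, Function.Injective f ∧
          (∀ k, s(f k, f (k + 1)) ∈ E) ∧ C = {e | ∃ k, e = s(f k, f (k + 1))})}

/-- The edge set of the factor graph of a word `w`. -/
def factorGraphEdges {α : Type*} (w : ℕ → α) : Set (Sym2 α) :=
  {e | ∃ a b, e = s(a, b) ∧ HasEdge w a b}

/-!
Counting Abelian factors of lengths 1 and 2 shows that every letter occurs in `w` and that the
factor graph has exactly `n` edges, loops included. A connected graph on `n` vertices containing a
cycle has at least `n` proper edges, and a triangle, which cannot consist of edges of a cycle of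
length `≥ 4`, would force one more; so the factor graph has neither loops nor triangles.
Consequently the anagram classes of factors `x a y` with middle letter `a` are disjoint for
distinct `a`, and as there are only `n` Abelian factors of length 3, each letter has exactly one;
by recurrence it contains every neighbour of `a`. Once `w` traverses an edge of the `m`-cycle it
must therefore run around the cycle in that direction forever: `w` is eventually `m`-periodic,
and by recurrence it has a single Abelian factor of length `m`.
-/

open Function SimpleGraph

lemma ZMod.natCast_ne_zero_of_pos_of_lt {m a : ℕ} (ha : 0 < a) (ham : a < m) :
    (a : ZMod m) ≠ 0 := by
  rw [Ne, ZMod.natCast_eq_zero_iff]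
  exact fun h => (Nat.le_of_dvd ha h).not_gt ham

lemma ZMod.false_of_triangle {m : ℕ} (hm : 4 ≤ m) {a b c : ZMod m}
    (hab : b = a + 1 ∨ a = b + 1) (hbc : c = b + 1 ∨ b = c + 1)
    (hac : c = a + 1 ∨ a = c + 1) : False := by
  have h1 : ((1 : ℕ) : ZMod m) ≠ 0 := natCast_ne_zero_of_pos_of_lt one_pos (by omega)
  have h3 : ((3 : ℕ) : ZMod m) ≠ 0 := natCast_ne_zero_of_pos_of_lt three_pos (by omega)
  push_cast at h1 h3
  rcases hab with hab | hab <;> rcases hbc with hbc | hbc <;> rcases hac with hac | hac <;>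
    grind

namespace SimpleGraph

variable {V : Type*} {G : SimpleGraph V}

lemma Connected.connected_deleteEdges_of_reachable (hG : G.Connected) {u v : V}
    (h : (G.deleteEdges {s(u, v)}).Reachable u v) : (G.deleteEdges {s(u, v)}).Connected :=
  hG.connected_delete_edge_of_not_isBridge (by rwa [isBridge_iff, not_not])

lemma Connected.card_le_ncard_edgeSet_of_reachable_deleteEdges [Finite V] (hG : G.Connected)
    {u v : V} (huv : G.Adj u v) (h : (G.deleteEdges {s(u, v)}).Reachable u v) :
    Nat.card V ≤ G.edgeSet.ncard := by
  have := (hG.connected_deleteEdges_of_reachable h).card_vert_le_card_edgeSet_add_one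
  rwa [edgeSet_deleteEdges, Nat.card_coe_set_eq,
    Set.ncard_sdiff_singleton_add_one (G.mem_edgeSet.2 huv)] at this

variable {m : ℕ} {f : ZMod m → V}

lemma reachable_deleteEdges_of_cycle (hm : 3 ≤ m) (hf : Injective f)
    (hadj : ∀ k, G.Adj (f k) (f (k + 1))) :
    (G.deleteEdges {s(f 0, f 1)}).Reachable (f 0) (f 1) := by
  have hne : ∀ k : ZMod m, k ≠ 0 → s(f k, f (k + 1)) ≠ s(f 0, f 1) := by
    intro k hk h
    simp only [Sym2.eq_iff, hf.eq_iff] at h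
    rcases h with ⟨h0, -⟩ | ⟨rfl, h1⟩
    · exact hk h0
    · refine ZMod.natCast_ne_zero_of_pos_of_lt two_pos hm ?_
      push_cast
      linear_combination h1
  have hpath : ∀ t : ℕ, t + 1 ≤ m →
      (G.deleteEdges {s(f 0, f 1)}).Reachable (f 1) (f (t + 1 : ℕ)) := by
    intro t ht
    induction t with
    | zero => simp
    | succ t ih =>
      refine (ih (by omega)).trans (Adj.reachable ?_)
      rw [deleteEdges_adj, Set.mem_singleton_iff, Nat.cast_succ (t + 1)]
      exact ⟨hadj _, hne _ (ZMod.natCast_ne_zero_of_pos_of_lt (by omega) (by omega))⟩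
  simpa [Nat.sub_add_cancel (by omega : 1 ≤ m)] using (hpath (m - 1) (by omega)).symm

lemma Connected.card_le_ncard_edgeSet_of_cycle [Finite V] (hG : G.Connected) (hm : 3 ≤ m)
    (hf : Injective f) (hadj : ∀ k, G.Adj (f k) (f (k + 1))) :
    Nat.card V ≤ G.edgeSet.ncard :=
  hG.card_le_ncard_edgeSet_of_reachable_deleteEdges (by simpa using hadj 0)
    (reachable_deleteEdges_of_cycle hm hf hadj)

lemma Connected.card_lt_ncard_edgeSet_of_cycle [Finite V] (hG : G.Connected) (hm : 3 ≤ m)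
    (hf : Injective f) (hadj : ∀ k, G.Adj (f k) (f (k + 1))) {u v : V} (huv : G.Adj u v)
    (hcyc : ∀ k, s(f k, f (k + 1)) ≠ s(u, v)) (h : (G.deleteEdges {s(u, v)}).Reachable u v) :
    Nat.card V < G.edgeSet.ncard := by
  have hle := (hG.connected_deleteEdges_of_reachable h).card_le_ncard_edgeSet_of_cycle hm hf
    fun k => (deleteEdges_adj ..).2 ⟨hadj k, hcyc k⟩
  rw [edgeSet_deleteEdges] at hle
  have := Set.ncard_sdiff_singleton_add_one (G.mem_edgeSet.2 huv)
  omega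

lemma exists_cycle_edge_iff (hf : Injective f) {a b : ZMod m} :
    (∃ k, s(f k, f (k + 1)) = s(f a, f b)) ↔ b = a + 1 ∨ a = b + 1 := by
  simp only [Sym2.eq_iff, hf.eq_iff]
  constructor
  · rintro ⟨k, ⟨rfl, rfl⟩ | ⟨rfl, rfl⟩⟩
    exacts [Or.inl rfl, Or.inr rfl]
  · rintro (rfl | rfl)
    exacts [⟨a, Or.inl ⟨rfl, rfl⟩⟩, ⟨b, Or.inr ⟨rfl, rfl⟩⟩]

lemma mem_range_of_cycle_edge {k : ZMod m} {x y : V} (h : s(f k, f (k + 1)) = s(x, y)) :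
    x ∈ Set.range f ∧ y ∈ Set.range f := by
  rcases Sym2.eq_iff.1 h with ⟨rfl, rfl⟩ | ⟨rfl, rfl⟩
  exacts [⟨⟨_, rfl⟩, ⟨_, rfl⟩⟩, ⟨⟨_, rfl⟩, ⟨_, rfl⟩⟩]

lemma exists_not_cycle_edge_of_triangle (hm : 4 ≤ m) (hf : Injective f) (x y z : V) :
    (∀ k, s(f k, f (k + 1)) ≠ s(x, y)) ∨ (∀ k, s(f k, f (k + 1)) ≠ s(y, z)) ∨
      ∀ k, s(f k, f (k + 1)) ≠ s(x, z) := by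
  by_contra! ⟨⟨k₁, h₁⟩, ⟨k₂, h₂⟩, ⟨k₃, h₃⟩⟩
  obtain ⟨⟨a, rfl⟩, ⟨b, rfl⟩⟩ := mem_range_of_cycle_edge h₁
  obtain ⟨-, ⟨c, rfl⟩⟩ := mem_range_of_cycle_edge h₂
  exact ZMod.false_of_triangle hm ((exists_cycle_edge_iff hf).1 ⟨k₁, h₁⟩)
    ((exists_cycle_edge_iff hf).1 ⟨k₂, h₂⟩) ((exists_cycle_edge_iff hf).1 ⟨k₃, h₃⟩)

lemma Connected.cliqueFree_three_of_cycle [Finite V] (hG : G.Connected) (hm : 4 ≤ m)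
    (hf : Injective f) (hadj : ∀ k, G.Adj (f k) (f (k + 1)))
    (hcard : G.edgeSet.ncard ≤ Nat.card V) : G.CliqueFree 3 := by
  have key : ∀ {a b c : V}, G.Adj a b → G.Adj b c → G.Adj a c →
      (∀ k, s(f k, f (k + 1)) ≠ s(a, c)) → False := fun hab hbc hac hcyc =>
    (hcard.trans_lt (hG.card_lt_ncard_edgeSet_of_cycle (by omega) hf hadj hac hcyc
      ((deleteEdges_adj ..).2 ⟨hab, by simp [hab.ne', hbc.ne]⟩ |>.reachable.trans
        ((deleteEdges_adj ..).2 ⟨hbc, by simp [hab.ne', hbc.ne]⟩).reachable))).false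
  classical
  intro t ht
  obtain ⟨x, y, z, hxy, hxz, hyz, -⟩ := is3Clique_iff.1 ht
  rcases exists_not_cycle_edge_of_triangle hm hf x y z with h | h | h
  · exact key hxz hyz.symm hxy h
  · exact key hxy.symm hxz hyz h
  · exact key hxy hyz hxz h

end SimpleGraph

lemma subsingleton_of_pairwise_disjoint_of_ncard_le {ι β : Type*} [Finite ι] {T : ι → Set β}
    {S : Set β} (hS : S.Finite) (hcard : S.ncard ≤ Nat.card ι) (hTS : ∀ i, T i ⊆ S)
    (hT : ∀ i, (T i).Nonempty) (hdisj : Pairwise (Disjoint on T)) (i : ι) :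
    (T i).Subsingleton := by
  choose g hg using hT
  have hg_inj : Injective g := fun i j h =>
    by_contra fun hij => (hdisj hij).ne_of_mem (hg i) (h ▸ hg j) rfl
  have hrange : Set.range g = S :=
    Set.eq_of_subset_of_ncard_le (Set.range_subset_iff.2 fun i => hTS i (hg i))
      (by rwa [Set.ncard_range_of_injective hg_inj]) hS
  have hmem : ∀ s ∈ T i, s = g i := by
    intro s hs
    obtain ⟨j, rfl⟩ : s ∈ Set.range g := hrange ▸ hTS i hs
    rw [hg_inj.eq_iff]
    by_contra hji
    exact (hdisj hji).ne_of_mem (hg j) hs rfl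
  exact fun s hs t ht => (hmem s hs).trans (hmem t ht).symm

lemma SimpleGraph.CliqueFree.eq_of_multiset_triple_eq {V : Type*} {G : SimpleGraph V}
    (hG : G.CliqueFree 3) {x a y x' b y' : V} (hxa : G.Adj x a) (hay : G.Adj a y)
    (hx'b : G.Adj x' b) (hby' : G.Adj b y') (h : ({x, a, y} : Multiset V) = {x', b, y'}) :
    a = b := by
  classical
  by_contra hab
  have hnbr : ∀ z ∈ ({x, a, y} : Multiset V).erase b, G.Adj b z := by
    rw [h, Multiset.insert_eq_cons, Multiset.insert_eq_cons, Multiset.cons_swap,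
      Multiset.erase_cons_head]
    simp [hx'b.symm, hby']
  have hb : b ∈ ({x, a, y} : Multiset V) := by rw [h]; simp
  by_cases hbx : b = x
  · subst hbx
    exact hG {b, a, y} (is3Clique_triple_iff.2 ⟨hxa, hnbr y (by simp), hay⟩)
  · obtain rfl : b = y := by simpa [hbx, Ne.symm hab] using hb
    exact hG {x, a, b} (is3Clique_triple_iff.2
      ⟨hxa, (hnbr x ((Multiset.mem_erase_of_ne (Ne.symm hbx)).2 (by simp))).symm, hay⟩)

section Words

variable {α : Type*} {w : ℕ → α}

@[simp]
lemma length_factorAt (w : ℕ → α) (i m : ℕ) : (factorAt w i m).length = m := by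
  simp [factorAt]

lemma isFactor_factorAt (w : ℕ → α) (i m : ℕ) : IsFactor w (factorAt w i m) :=
  ⟨i, by rw [length_factorAt]⟩

lemma isFactor_pair_iff {a b : α} : IsFactor w [a, b] ↔ ∃ i, w i = a ∧ w (i + 1) = b := by
  simp [IsFactor, factorAt, List.range_succ, eq_comm]

lemma isFactor_triple_iff {a b c : α} :
    IsFactor w [a, b, c] ↔ ∃ i, w i = a ∧ w (i + 1) = b ∧ w (i + 2) = c := by
  simp [IsFactor, factorAt, List.range_succ, eq_comm]

lemma hasEdge_succ (w : ℕ → α) (i : ℕ) : HasEdge w (w i) (w (i + 1)) :=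
  Or.inl (isFactor_pair_iff.2 ⟨i, rfl, rfl⟩)

lemma HasEdge.symm {a b : α} (h : HasEdge w a b) : HasEdge w b a :=
  Or.symm h

lemma mk_mem_factorGraphEdges {a b : α} : s(a, b) ∈ factorGraphEdges w ↔ HasEdge w a b := by
  refine ⟨?_, fun h => ⟨a, b, rfl, h⟩⟩
  rintro ⟨c, d, h, hcd⟩
  rcases Sym2.eq_iff.1 h with ⟨rfl, rfl⟩ | ⟨rfl, rfl⟩
  exacts [hcd, hcd.symm]

def factorGraph (w : ℕ → α) : SimpleGraph α :=
  SimpleGraph.fromEdgeSet (factorGraphEdges w)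

lemma factorGraph_adj {a b : α} : (factorGraph w).Adj a b ↔ HasEdge w a b ∧ a ≠ b := by
  rw [factorGraph, fromEdgeSet_adj, mk_mem_factorGraphEdges]

lemma factorGraph_connected (hw : Surjective w) : (factorGraph w).Connected := by
  refine (connected_iff_exists_forall_reachable _).2 ⟨w 0, fun v => ?_⟩
  obtain ⟨i, rfl⟩ := hw v
  induction i with
  | zero => rfl
  | succ i ih =>
    refine ih.trans ?_
    by_cases h : w i = w (i + 1)
    · rw [h]
    · exact (factorGraph_adj.2 ⟨hasEdge_succ w i, h⟩).reachable

lemma ncard_edgeSet_factorGraph_le [Finite α] :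
    (factorGraph w).edgeSet.ncard ≤ (factorGraphEdges w).ncard :=
  Set.ncard_le_ncard (by simp [factorGraph])

lemma ncard_edgeSet_factorGraph_lt [Finite α] {a : α} (h : HasEdge w a a) :
    (factorGraph w).edgeSet.ncard < (factorGraphEdges w).ncard := by
  refine Set.ncard_lt_ncard ?_
  rw [factorGraph, edgeSet_fromEdgeSet]
  exact Set.sdiff_ssubset_left_iff.2
    ⟨s(a, a), mk_mem_factorGraphEdges.2 h, Sym2.mk_isDiag_iff.2 rfl⟩

lemma surjective_of_ncard_abelianFactors_one [Finite α]
    (h : (abelianFactors w 1).ncard = Nat.card α) : Surjective w := by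
  have himage : abelianFactors w 1 = (fun a => ({a} : Multiset α)) '' Set.range w := by
    ext s
    simp [abelianFactors, factorAt, eq_comm]
  rw [himage, Set.ncard_image_of_injective _ fun _ _ => Multiset.singleton_inj.1] at h
  exact Set.range_eq_univ.1 ((Set.eq_univ_iff_ncard _).2 h)

lemma Sym2.toMultiset_injective : Injective (Sym2.toMultiset : Sym2 α → Multiset α) :=
  fun z z' h => Sym2.ext fun x => by rw [← Sym2.mem_toMultiset, h, Sym2.mem_toMultiset]

lemma ncard_abelianFactors_two : (abelianFactors w 2).ncard = (factorGraphEdges w).ncard := by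
  have himage : abelianFactors w 2 = Sym2.toMultiset '' factorGraphEdges w := by
    ext s
    constructor
    · rintro ⟨i, rfl⟩
      exact ⟨s(w i, w (i + 1)), mk_mem_factorGraphEdges.2 (hasEdge_succ w i), rfl⟩
    · rintro ⟨e, he, rfl⟩
      induction e using Sym2.ind with | _ a b =>
      rcases mk_mem_factorGraphEdges.1 he with hab | hba
      · obtain ⟨i, rfl, rfl⟩ := isFactor_pair_iff.1 hab
        exact ⟨i, rfl⟩
      · obtain ⟨i, rfl, rfl⟩ := isFactor_pair_iff.1 hba
        exact ⟨i, by rw [Sym2.eq_swap]; rfl⟩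
  rw [himage, Set.ncard_image_of_injective _ Sym2.toMultiset_injective]

lemma factorGraph_adj_of_hasEdge (hloop : ∀ a, ¬ HasEdge w a a) {a b : α}
    (h : HasEdge w a b) : (factorGraph w).Adj a b :=
  factorGraph_adj.2 ⟨h, by rintro rfl; exact hloop a h⟩

lemma mem_triples (w : ℕ → α) (j : ℕ) :
    ({w j, w (j + 1), w (j + 2)} : Multiset α) ∈ triples w (w (j + 1)) :=
  ⟨w j, w (j + 2), isFactor_triple_iff.2 ⟨j, rfl, rfl, rfl⟩, rfl⟩

lemma triples_subset_abelianFactors (w : ℕ → α) (a : α) :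
    triples w a ⊆ abelianFactors w 3 := by
  rintro _ ⟨x, y, hxy, rfl⟩
  obtain ⟨i, rfl, rfl, rfl⟩ := isFactor_triple_iff.1 hxy
  exact ⟨i, rfl⟩

lemma exists_pos_eq_of_recurrent (hrec : Recurrent w) (i : ℕ) : ∃ j, 0 < j ∧ w j = w i := by
  obtain ⟨j, hj, h⟩ := hrec [w i] ⟨i, rfl⟩ 1
  exact ⟨j, hj, by simpa [factorAt] using h.symm⟩

lemma triples_nonempty (hrec : Recurrent w) (i : ℕ) : (triples w (w i)).Nonempty := by
  obtain ⟨j, hj, hji⟩ := exists_pos_eq_of_recurrent hrec i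
  obtain ⟨j, rfl⟩ : ∃ k, j = k + 1 := ⟨j - 1, by omega⟩
  exact ⟨_, hji ▸ mem_triples w j⟩

lemma pairwise_disjoint_triples (hloop : ∀ a, ¬ HasEdge w a a)
    (hG : (factorGraph w).CliqueFree 3) : Pairwise (Disjoint on triples w) := by
  intro a b hab
  rw [Function.onFun, Set.disjoint_left]
  rintro _ ⟨x, y, hxay, rfl⟩ ⟨x', y', hx'by', h⟩
  obtain ⟨i, rfl, rfl, rfl⟩ := isFactor_triple_iff.1 hxay
  obtain ⟨j, rfl, rfl, rfl⟩ := isFactor_triple_iff.1 hx'by'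
  have adj k := factorGraph_adj_of_hasEdge hloop (hasEdge_succ w k)
  exact hab (hG.eq_of_multiset_triple_eq (adj i) (adj (i + 1)) (adj j) (adj (j + 1)) h)

lemma triples_subsingleton [Finite α] (hrec : Recurrent w) (hw : Surjective w)
    (hloop : ∀ a, ¬ HasEdge w a a) (hG : (factorGraph w).CliqueFree 3)
    (h3 : (abelianFactors w 3).ncard = Nat.card α) (a : α) : (triples w a).Subsingleton := by
  have : Nonempty α := ⟨w 0⟩
  refine subsingleton_of_pairwise_disjoint_of_ncard_le
    (Set.finite_of_ncard_pos (h3 ▸ Nat.card_pos)) h3.le (triples_subset_abelianFactors w)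
    (fun a => ?_) (pairwise_disjoint_triples hloop hG) a
  obtain ⟨i, rfl⟩ := hw a
  exact triples_nonempty hrec i

lemma eq_or_eq_of_hasEdge (hrec : Recurrent w) {a z : α} (htrip : (triples w a).Subsingleton)
    (hloop : ¬ HasEdge w a a) (hz : HasEdge w a z) {j : ℕ} (hj : w (j + 1) = a) :
    z = w j ∨ z = w (j + 2) := by
  obtain ⟨p, hp, hzp⟩ : ∃ p, w (p + 1) = a ∧ (w p = z ∨ w (p + 2) = z) := by
    rcases hz with haz | hza
    · obtain ⟨q, hq, hq'⟩ := hrec _ haz 1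
      obtain ⟨p, rfl⟩ : ∃ p, q = p + 1 := ⟨q - 1, by omega⟩
      simp [factorAt, List.range_succ] at hq'
      exact ⟨p, hq'.1.symm, Or.inr hq'.2.symm⟩
    · obtain ⟨p, rfl, rfl⟩ := isFactor_pair_iff.1 hza
      exact ⟨p, rfl, Or.inl rfl⟩
  have htr : ({w p, a, w (p + 2)} : Multiset α) = {w j, a, w (j + 2)} :=
    htrip (hp ▸ mem_triples w p) (hj ▸ mem_triples w j)
  have hz : z ∈ ({w j, a, w (j + 2)} : Multiset α) := by
    rw [← htr]; rcases hzp with rfl | rfl <;> simp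
  simp only [Multiset.insert_eq_cons, Multiset.mem_cons, Multiset.mem_singleton] at hz
  rcases hz with h | rfl | h
  exacts [Or.inl h, (hloop hz).elim, Or.inr h]

lemma eq_add_of_cycle {m : ℕ} (hm : 3 ≤ m) {f : ZMod m → α} (hf : Injective f)
    (hadj : ∀ k, HasEdge w (f k) (f (k + 1)))
    (hnbr : ∀ {a z : α} {j : ℕ}, HasEdge w a z → w (j + 1) = a →
      z = w j ∨ z = w (j + 2))
    {i : ℕ} {k : ZMod m} (h₀ : w i = f k) (h₁ : w (i + 1) = f (k + 1)) (t : ℕ) :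
    w (i + t) = f (k + t) := by
  suffices ∀ t : ℕ, w (i + t) = f (k + t) ∧ w (i + t + 1) = f (k + t + 1) from (this t).1
  intro t
  induction t with
  | zero => simpa using ⟨h₀, h₁⟩
  | succ t ih =>
    refine ⟨by rw [← add_assoc, ih.2]; push_cast; ring_nf, ?_⟩
    rcases hnbr (hadj (k + t + 1)) ih.2 with h | h
    · rw [ih.1, hf.eq_iff] at h
      refine absurd ?_ (ZMod.natCast_ne_zero_of_pos_of_lt two_pos hm)
      push_cast
      linear_combination h
    · rw [show i + (t + 1) + 1 = i + t + 2 by ring, ← h]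
      push_cast
      ring_nf

lemma exists_periodic_of_cycle {m : ℕ} (hm : 3 ≤ m) {f : ZMod m → α} (hf : Injective f)
    (hadj : ∀ k, HasEdge w (f k) (f (k + 1)))
    (hnbr : ∀ {a z : α} {j : ℕ}, HasEdge w a z → w (j + 1) = a →
      z = w j ∨ z = w (j + 2)) :
    ∃ i, ∀ t, w (i + t + m) = w (i + t) := by
  have periodic {g : ZMod m → α} {i : ℕ} {k : ZMod m} (h : ∀ t : ℕ, w (i + t) = g (k + t))
      (t : ℕ) : w (i + t + m) = w (i + t) := by
    rw [add_assoc, h, h, Nat.cast_add, ZMod.natCast_self, add_zero]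
  rcases hadj 0 with h | h <;> obtain ⟨i, h₀, h₁⟩ := isFactor_pair_iff.1 h
  · exact ⟨i, periodic (eq_add_of_cycle hm hf hadj hnbr h₀ h₁)⟩
  · have hadj' k : HasEdge w (f (-k)) (f (-(k + 1))) := by
      convert (hadj (-(k + 1))).symm using 2
      ring
    refine ⟨i, periodic (g := fun k => f (-k)) (k := -1)
      (eq_add_of_cycle hm (hf.comp neg_injective) hadj' hnbr ?_ ?_)⟩
    · simpa using h₀
    · simpa using h₁

lemma cons_factorAt_succ (w : ℕ → α) (i m : ℕ) :
    w i ::ₘ (factorAt w (i + 1) m : Multiset α) =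
      w (i + m) ::ₘ (factorAt w i m : Multiset α) := by
  have h₁ : factorAt w i (m + 1) = w i :: factorAt w (i + 1) m := by
    simp [factorAt, List.range_succ_eq_map, add_assoc, add_comm 1]
  have h₂ : factorAt w i (m + 1) = factorAt w i m ++ [w (i + m)] := by
    simp [factorAt, List.range_succ]
  rw [Multiset.cons_coe, Multiset.cons_coe, ← h₁, h₂, Multiset.coe_eq_coe]
  exact List.perm_append_singleton _ _

lemma factorAt_add_eq_of_periodic {i m : ℕ} (hper : ∀ t, w (i + t + m) = w (i + t)) (t : ℕ) :
    (factorAt w (i + t) m : Multiset α) = factorAt w i m := by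
  induction t with
  | zero => rfl
  | succ t ih =>
    rw [← ih, ← Multiset.cons_inj_right (w (i + t)), ← add_assoc, cons_factorAt_succ, hper]

lemma abelianFactors_subsingleton_of_periodic (hrec : Recurrent w) {i m : ℕ}
    (hper : ∀ t, w (i + t + m) = w (i + t)) : (abelianFactors w m).Subsingleton := by
  suffices h : ∀ p, (factorAt w p m : Multiset α) = factorAt w i m by
    rintro _ ⟨p, rfl⟩ _ ⟨q, rfl⟩
    rw [h p, h q]
  intro p
  obtain ⟨q, hq, hpq⟩ := hrec _ (isFactor_factorAt w p m) i
  obtain ⟨t, rfl⟩ := Nat.exists_eq_add_of_le hq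
  rw [hpq, length_factorAt, factorAt_add_eq_of_periodic hper]

end Words

/-- for `n ≥ 4`, a recurrent word over an `n`-letter alphabet with
exactly `n` Abelian factors of every length has no `m`-cycle with `m ≥ 4` in its
factor graph. -/
theorem stmt8 (n : ℕ) (hn : 4 ≤ n) (w : ℕ → Fin n) (hrec : Recurrent w)
    (hcomp : ∀ m, 1 ≤ m → (abelianFactors w m).ncard = n) :
    ¬ ∃ m : ℕ, 4 ≤ m ∧ ∃ f : ZMod m → Fin n, Function.Injective f ∧
        ∀ k, HasEdge w (f k) (f (k + 1)) := by
  rintro ⟨m, hm, f, hf, hadj⟩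
  have hsurj : Surjective w :=
    surjective_of_ncard_abelianFactors_one (by simpa using hcomp 1 le_rfl)
  have hedges : (factorGraphEdges w).ncard = n := ncard_abelianFactors_two ▸ hcomp 2 (by omega)
  have hconn := factorGraph_connected hsurj
  have hcyc k : (factorGraph w).Adj (f k) (f (k + 1)) :=
    factorGraph_adj.2 ⟨hadj k, hf.ne <| by
      simpa using ZMod.natCast_ne_zero_of_pos_of_lt one_pos (by omega : 1 < m)⟩
  have hcard : n ≤ (factorGraph w).edgeSet.ncard := by
    simpa using hconn.card_le_ncard_edgeSet_of_cycle (by omega) hf hcyc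
  have hloop a : ¬ HasEdge w a a := fun h => by
    have := ncard_edgeSet_factorGraph_lt h
    omega
  have hG : (factorGraph w).CliqueFree 3 := hconn.cliqueFree_three_of_cycle hm hf hcyc <| by
    simpa [← hedges] using ncard_edgeSet_factorGraph_le
  have htrip := triples_subsingleton hrec hsurj hloop hG (by simpa using hcomp 3 (by omega))
  obtain ⟨i, hper⟩ := exists_periodic_of_cycle (by omega) hf hadj
    fun hz hj => eq_or_eq_of_hasEdge hrec (htrip _) (hloop _) hz hj
  have hsub := abelianFactors_subsingleton_of_periodic hrec hper
  have := (Set.ncard_le_one hsub.finite).2 hsub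
  rw [hcomp m (by omega)] at this
  omega
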